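/- Let A = {H_1,…,H_l} be a hyperplane arrangement in ℂ^n with only isolated non-normal crossings, each such crossing being a point lying on exactly n+1 hyperplanes. Suppose there is a partition Π_1, …, Π_{n+1} of A and nonzero scalars a_1,…,a_{n+1} with a_1 f_1 + ⋯ + a_{n+1} f_{n+1} = 0 where f_i is the product of the defining linear forms of hyperplanes in Π_i. Then the subspace V of the degree-one part of the Orlik–Solomon algebra spanned by the n vectors {Σ_{H_j∈Π_i} x_j − Σ_{H_j∈Π_{n+1}} x_j : 1 ≤ i ≤ n} is n-isotropic and not contained in any coordinate hyperplane. -/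

import Mathlib

/-!
Write `e_i = ∑_{H_j ∈ Π_i} x_j`. Multilinear expansion shows that
`(e_1 - e_{n+1}) ∧ ⋯ ∧ (e_n - e_{n+1})` is the sum, over the points `P` of the arrangement lying
on one hyperplane `H_{j_i}` of each block `Π_i`, of
`(x_{j_1} - x_{j_{n+1}}) ∧ ⋯ ∧ (x_{j_n} - x_{j_{n+1}})`.
Indeed, `n` hyperplanes from distinct blocks meet in a single point (normal crossings), that point
lies on at most `n + 1` hyperplanes, and by the relation `∑ a_i f_i = 0` it lies on a hyperplane of
the remaining block; so any choice of hyperplanes in all blocks but one extends uniquely to such a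
point. Each summand is the Orlik–Solomon boundary `∂(x_{j_{n+1}} x_{j_1} ⋯ x_{j_n})` of a
dependent set, hence zero, and an alternating form that vanishes on an `n`-tuple vanishes on every
`n`-tuple from its span.
-/

noncomputable section
open ExteriorAlgebra

/-- The canonical degree-one generator `x_i` of the exterior algebra of `ℂ^l`. -/
def xGen (l : ℕ) (i : Fin l) : ExteriorAlgebra ℂ (Fin l → ℂ) :=
  ι ℂ (Pi.single i (1 : ℂ))

/-- The wedge monomial `x_{f 0} ∧ ⋯ ∧ x_{f (m-1)}`. -/
def wedgeMon (l m : ℕ) (f : Fin m → Fin l) : ExteriorAlgebra ℂ (Fin l → ℂ) :=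
  (List.ofFn fun k => xGen l (f k)).prod

/-- The Orlik–Solomon boundary `∂(x_{f 0} ∧ ⋯ ∧ x_{f m})`. -/
def osBoundary (l m : ℕ) (f : Fin (m + 1) → Fin l) : ExteriorAlgebra ℂ (Fin l → ℂ) :=
  ∑ j : Fin (m + 1), ((-1 : ℂ) ^ (j : ℕ)) • wedgeMon l m (f ∘ j.succAbove)

/-- The defining relations of the Orlik–Solomon algebra of the (projective, modelled as
central in `ℂ^{n+1}`) arrangement given by the linear forms `α`. -/
def osRel (n l : ℕ) (α : Fin l → ((Fin (n + 1) → ℂ) →ₗ[ℂ] ℂ)) :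
    ExteriorAlgebra ℂ (Fin l → ℂ) → ExteriorAlgebra ℂ (Fin l → ℂ) → Prop :=
  fun p q =>
    ((∃ (m : ℕ) (f : Fin (m + 1) → Fin l), ¬ LinearIndependent ℂ (fun k => α (f k)) ∧
        p = osBoundary l m f) ∨
     (∃ (m : ℕ) (f : Fin m → Fin l), (⨅ k, LinearMap.ker (α (f k))) = ⊥ ∧
        p = wedgeMon l m f)) ∧ q = 0

/-- The Orlik–Solomon algebra. -/
def OSAlg (n l : ℕ) (α : Fin l → ((Fin (n + 1) → ℂ) →ₗ[ℂ] ℂ)) : Type :=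
  RingQuot (osRel n l α)

instance (n l : ℕ) (α : Fin l → ((Fin (n + 1) → ℂ) →ₗ[ℂ] ℂ)) : Ring (OSAlg n l α) :=
  inferInstanceAs (Ring (RingQuot (osRel n l α)))

instance (n l : ℕ) (α : Fin l → ((Fin (n + 1) → ℂ) →ₗ[ℂ] ℂ)) : Algebra ℂ (OSAlg n l α) :=
  inferInstanceAs (Algebra ℂ (RingQuot (osRel n l α)))

/-- The projection from the exterior algebra onto the Orlik–Solomon algebra. -/
def osProj (n l : ℕ) (α : Fin l → ((Fin (n + 1) → ℂ) →ₗ[ℂ] ℂ)) :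
    ExteriorAlgebra ℂ (Fin l → ℂ) →ₐ[ℂ] OSAlg n l α :=
  RingQuot.mkAlgHom ℂ (osRel n l α)

/-- The flat determined by a set of hyperplane indices. -/
def arrFlat (n l : ℕ) (α : Fin l → ((Fin (n + 1) → ℂ) →ₗ[ℂ] ℂ)) (S : Finset (Fin l)) :
    Submodule ℂ (Fin (n + 1) → ℂ) :=
  ⨅ i ∈ S, LinearMap.ker (α i)

/-- The set of indices of hyperplanes containing a given flat. -/
def onIdx (n l : ℕ) (α : Fin l → ((Fin (n + 1) → ℂ) →ₗ[ℂ] ℂ))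
    (P : Submodule ℂ (Fin (n + 1) → ℂ)) : Finset (Fin l) :=
  open Classical in Finset.univ.filter fun i => P ≤ LinearMap.ker (α i)

/-- The linear form on `ℂ^{n+1}` with coefficient vector `b`. -/
def linForm (n : ℕ) (b : Fin (n + 1) → ℂ) : (Fin (n + 1) → ℂ) →ₗ[ℂ] ℂ :=
  ∑ m, b m • LinearMap.proj m

/-- The defining linear form of a hyperplane, as a polynomial. -/
def polyForm (n : ℕ) (b : Fin (n + 1) → ℂ) : MvPolynomial (Fin (n + 1)) ℂ :=
  ∑ m, MvPolynomial.C (b m) * MvPolynomial.X m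

namespace AlternatingMap

variable {R M N ι : Type*} [CommRing R] [AddCommGroup M] [Module R M] [AddCommGroup N]
  [Module R N]

theorem map_sub_const [Fintype ι] [DecidableEq ι] (f : M [⋀^ι]→ₗ[R] N) (v : ι → M) (z : M) :
    f (fun i => v i - z) = f v - ∑ i, f (Function.update v i z) := by
  have h := f.toMultilinearMap.map_add_eq_map_add_linearDeriv_add v (fun _ => -z)
  rw [Finset.sum_eq_zero fun s hs => ?_] at h
  · rw [show (fun i => v i - z) = v + fun _ => -z by ext; simp [sub_eq_add_neg]]
    simpa [MultilinearMap.linearDeriv_apply, sub_eq_add_neg] using h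
  obtain ⟨i, hi, j, hj, hij⟩ := Finset.one_lt_card.1 (Finset.mem_filter.1 hs).2
  exact f.map_eq_zero_of_eq _ (by simp [hi, hj]) hij

theorem sum_neg_one_pow_smul_map_cons_comp_succAbove {n : ℕ} (f : M [⋀^Fin n]→ₗ[R] N)
    (y : M) (v : Fin n → M) :
    ∑ k : Fin (n + 1), (-1 : R) ^ (k : ℕ) • f (Fin.cons y v ∘ k.succAbove) =
      f v - ∑ t, f (Function.update v t y) := by
  rcases n with _ | m
  · simp
  rw [Fin.sum_univ_succ, sub_eq_add_neg, ← Finset.sum_neg_distrib]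
  congr 1
  · simp
  refine Finset.sum_congr rfl fun t _ => ?_
  rw [← Fin.insertNth_removeNth, map_insertNth, Fin.val_succ, pow_succ]
  have hcons : Fin.cons y v ∘ t.succ.succAbove = Matrix.vecCons y (t.removeNth v) := by
    ext i
    cases i using Fin.cases <;> simp [Fin.removeNth, Matrix.vecCons, Fin.succ_succAbove_succ]
  rw [hcons, mul_neg_one, neg_smul, ← Int.cast_smul_eq_zsmul R]
  norm_num

theorem map_eq_zero_of_mem_span [Fintype ι] [DecidableEq ι] {f : M [⋀^ι]→ₗ[R] N} {w : ι → M}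
    (hw : f w = 0) {u : ι → M} (hu : ∀ i, u i ∈ Submodule.span R (Set.range w)) : f u = 0 := by
  choose A hA using fun i => Submodule.mem_span_range_iff_exists_fun R |>.1 (hu i)
  have hu' : u = fun i => ∑ k, A i k • w k := funext fun i => (hA i).symm
  rw [hu', ← coe_multilinearMap, f.toMultilinearMap.map_sum]
  refine Finset.sum_eq_zero fun g _ => ?_
  rw [MultilinearMap.map_smul_univ, coe_multilinearMap, show (fun i => w (g i)) = w ∘ g from rfl]
  by_cases hg : Function.Injective g
  · rw [show g = Equiv.ofBijective g (Finite.injective_iff_bijective.1 hg) from rfl, f.map_perm,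
      hw, smul_zero, smul_zero]
  · rw [f.map_eq_zero_of_not_injective _ fun h => hg h.of_comp, smul_zero]

end AlternatingMap

theorem Function.Injective.update_of_notMem_range {α β : Type*} [DecidableEq α] {σ : α → β}
    (hσ : Function.Injective σ) {b : β} (hb : b ∉ Set.range σ) (a : α) :
    Function.Injective (Function.update σ a b) ∧ σ a ∉ Set.range (Function.update σ a b) := by
  refine ⟨fun x y h => ?_, fun ⟨k, hk⟩ => ?_⟩
  · simp only [Function.update_apply] at h
    split_ifs at h with hx hy hy
    exacts [hx.trans hy.symm, (hb ⟨y, h.symm⟩).elim, (hb ⟨x, h⟩).elim, hσ h]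
  · simp only [Function.update_apply] at hk
    split_ifs at hk with hka
    exacts [hb ⟨a, hk.symm⟩, hka (hσ hk)]

theorem Function.Injective.mem_range_of_ne {n : ℕ} {σ : Fin n → Fin (n + 1)}
    (hσ : Function.Injective σ) {i₀ : Fin (n + 1)} (hi₀ : i₀ ∉ Set.range σ) {i : Fin (n + 1)}
    (hi : i ≠ i₀) : i ∈ Set.range σ := by
  have himage : Finset.univ.image σ = Finset.univ.erase i₀ :=
    Finset.eq_of_subset_of_card_le
      (fun i hi => Finset.mem_erase.2 ⟨by rintro rfl; simp_all, Finset.mem_univ i⟩)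
      (by simp [Finset.card_image_of_injective _ hσ])
  have hmem : i ∈ Finset.univ.image σ := himage ▸ Finset.mem_erase.2 ⟨hi, Finset.mem_univ i⟩
  simpa using hmem

theorem Module.Dual.not_linearIndependent_of_apply_eq_zero {K V ι : Type*} [Field K]
    [AddCommGroup V] [Module K V] [FiniteDimensional K V] [Fintype ι]
    (hι : Fintype.card ι = Module.finrank K V) {φ : ι → Module.Dual K V} {p : V} (hp : p ≠ 0)
    (hφ : ∀ k, φ k p = 0) : ¬ LinearIndependent K φ := by
  intro hli
  have htop := hli.span_eq_top_of_card_eq_finrank' (by rwa [Subspace.dual_finrank_eq])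
  have hle : Submodule.span K (Set.range φ) ≤ LinearMap.ker (Module.Dual.eval K V p) :=
    Submodule.span_le.2 <| Set.range_subset_iff.2 hφ
  rw [htop] at hle
  exact hp <| (Module.forall_dual_apply_eq_zero_iff K p).1 fun f => hle Submodule.mem_top

section OrlikSolomon

variable {n l : ℕ} (α : Fin l → ((Fin (n + 1) → ℂ) →ₗ[ℂ] ℂ))

theorem wedgeMon_eq_ιMulti {m : ℕ} (g : Fin m → Fin l) :
    wedgeMon l m g = ιMulti ℂ m fun k => Pi.single (g k) (1 : ℂ) := by
  rw [ιMulti_apply]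
  rfl

theorem osBoundary_cons {m : ℕ} (j : Fin l) (g : Fin m → Fin l) :
    osBoundary l m (Fin.cons j g) =
      ιMulti ℂ m fun k => Pi.single (g k) (1 : ℂ) - Pi.single j 1 := by
  rw [AlternatingMap.map_sub_const,
    ← AlternatingMap.sum_neg_one_pow_smul_map_cons_comp_succAbove, osBoundary]
  refine Finset.sum_congr rfl fun k _ => ?_
  rw [wedgeMon_eq_ιMulti]
  congr 2
  ext1 i
  simp only [Function.comp_apply]
  cases k.succAbove i using Fin.cases <;> simp

theorem osProj_ιMulti_sub_eq_zero {m : ℕ} {j : Fin l} {g : Fin m → Fin l}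
    (h : ¬ LinearIndependent ℂ fun k => α ((Fin.cons j g : Fin (m + 1) → Fin l) k)) :
    osProj n l α (ιMulti ℂ m fun k => Pi.single (g k) (1 : ℂ) - Pi.single j 1) = 0 := by
  rw [← osBoundary_cons]
  exact (RingQuot.mkAlgHom_rel ℂ ⟨Or.inl ⟨m, _, h, rfl⟩, rfl⟩).trans (map_zero _)

end OrlikSolomon

section Geometry

variable {n l : ℕ} {α : Fin l → ((Fin (n + 1) → ℂ) →ₗ[ℂ] ℂ)}

variable (α) in
def tupleFlat {m : ℕ} (g : Fin m → Fin l) : Submodule ℂ (Fin (n + 1) → ℂ) :=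
  ⨅ k, LinearMap.ker (α (g k))

theorem mem_tupleFlat {m : ℕ} {g : Fin m → Fin l} {p : Fin (n + 1) → ℂ} :
    p ∈ tupleFlat α g ↔ ∀ k, α (g k) p = 0 := by
  simp [tupleFlat]

theorem tupleFlat_le_ker {m : ℕ} (g : Fin m → Fin l) (k : Fin m) :
    tupleFlat α g ≤ LinearMap.ker (α (g k)) :=
  iInf_le _ k

theorem tupleFlat_eq_arrFlat {m : ℕ} (g : Fin m → Fin l) :
    tupleFlat α g = arrFlat n l α (Finset.univ.image g) := by
  ext p
  simp [mem_tupleFlat, arrFlat, Submodule.mem_iInf]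

theorem tupleFlat_ne_bot (g : Fin n → Fin l) : tupleFlat α g ≠ ⊥ := by
  have hker : LinearMap.ker (LinearMap.pi fun k => α (g k)) = tupleFlat α g :=
    LinearMap.ker_pi _
  rw [← hker]
  exact LinearMap.ker_ne_bot_of_finrank_lt (by simp)

theorem not_linearIndependent_cons_of_tupleFlat_le_ker {g : Fin n → Fin l} {j : Fin l}
    (hj : tupleFlat α g ≤ LinearMap.ker (α j)) :
    ¬ LinearIndependent ℂ fun k => α ((Fin.cons j g : Fin (n + 1) → Fin l) k) := by
  obtain ⟨p, hp, hp0⟩ := Submodule.exists_mem_ne_zero_of_ne_bot (tupleFlat_ne_bot (α := α) g)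
  refine Module.Dual.not_linearIndependent_of_apply_eq_zero (by simp) hp0 fun k => ?_
  cases k using Fin.cases with
  | zero => exact hj hp
  | succ k => exact mem_tupleFlat.1 hp k

variable (α) in
/-- Dimensions are those of linear subspaces of `ℂ^{n+1}`: a point of `ℂP^n` is a flat of
`finrank` one. -/
structure HasINNC : Prop where
  card_onIdx_of_two_le_finrank : ∀ S : Finset (Fin l),
    2 ≤ Module.finrank ℂ (arrFlat n l α S) →
      (onIdx n l α (arrFlat n l α S)).card = (n + 1) - Module.finrank ℂ (arrFlat n l α S)
  card_onIdx_of_finrank_eq_one : ∀ S : Finset (Fin l),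
    Module.finrank ℂ (arrFlat n l α S) = 1 →
      (onIdx n l α (arrFlat n l α S)).card = n ∨ (onIdx n l α (arrFlat n l α S)).card = n + 1

theorem image_subset_onIdx_tupleFlat {m : ℕ} (g : Fin m → Fin l) :
    Finset.univ.image g ⊆ onIdx n l α (tupleFlat α g) := by
  intro j hj
  obtain ⟨k, -, rfl⟩ := Finset.mem_image.1 hj
  simpa [onIdx] using tupleFlat_le_ker g k

theorem HasINNC.finrank_tupleFlat (hA : HasINNC α) {g : Fin n → Fin l}
    (hg : Function.Injective g) : Module.finrank ℂ (tupleFlat α g) = 1 := by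
  have hpos : Module.finrank ℂ (tupleFlat α g) ≠ 0 :=
    fun h => tupleFlat_ne_bot g (Submodule.finrank_eq_zero.1 h)
  have hdim : Module.finrank ℂ (tupleFlat α g) ≤ n + 1 := by
    simpa using Submodule.finrank_le (tupleFlat α g)
  have hle := Finset.card_le_card (image_subset_onIdx_tupleFlat (α := α) g)
  rw [Finset.card_image_of_injective _ hg, Finset.card_univ, Fintype.card_fin] at hle
  rw [tupleFlat_eq_arrFlat] at hpos hdim hle ⊢
  by_contra hne
  rw [hA.card_onIdx_of_two_le_finrank _ (by omega)] at hle
  omega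

theorem HasINNC.tupleFlat_update (hA : HasINNC α) {g : Fin n → Fin l} {t : Fin n} {j : Fin l}
    (hg : Function.Injective g) (hg' : Function.Injective (Function.update g t j))
    (hj : tupleFlat α g ≤ LinearMap.ker (α j)) :
    tupleFlat α (Function.update g t j) = tupleFlat α g := by
  refine (Submodule.eq_of_le_of_finrank_eq (?_ : tupleFlat α g ≤ _) ?_).symm
  · refine le_iInf fun k => ?_
    rcases eq_or_ne k t with rfl | hk
    · simpa using hj
    · simpa [hk] using tupleFlat_le_ker g k
  · rw [hA.finrank_tupleFlat hg, hA.finrank_tupleFlat hg']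

/-- The point `tupleFlat α g` lies on the `n` hyperplanes `g` and on at most `n + 1` in all. -/
theorem HasINNC.eq_of_tupleFlat_le_ker (hA : HasINNC α) {g : Fin n → Fin l}
    (hg : Function.Injective g) {j j' : Fin l} (hj : j ∉ Set.range g) (hj' : j' ∉ Set.range g)
    (h : tupleFlat α g ≤ LinearMap.ker (α j)) (h' : tupleFlat α g ≤ LinearMap.ker (α j')) :
    j = j' := by
  by_contra hne
  have hsub : insert j (insert j' (Finset.univ.image g)) ⊆ onIdx n l α (tupleFlat α g) := by
    refine Finset.insert_subset (by simpa [onIdx] using h)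
      (Finset.insert_subset (by simpa [onIdx] using h') (image_subset_onIdx_tupleFlat g))
  have hle := Finset.card_le_card hsub
  rw [Finset.card_insert_of_notMem (by simpa [hne] using hj),
    Finset.card_insert_of_notMem (by simpa using hj'), Finset.card_image_of_injective _ hg,
    Finset.card_univ, Fintype.card_fin] at hle
  have hpt := hA.card_onIdx_of_finrank_eq_one (Finset.univ.image g)
    (by rw [← tupleFlat_eq_arrFlat]; exact hA.finrank_tupleFlat hg)
  rw [← tupleFlat_eq_arrFlat] at hpt
  omega

end Geometry

section Pencil

variable {n l : ℕ} {α : Fin l → ((Fin (n + 1) → ℂ) →ₗ[ℂ] ℂ)} {part : Fin l → Fin (n + 1)}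

variable (α part) in
/-- The geometric content of a relation `∑ a_i f_i = 0` with all `a_i ≠ 0`. -/
def BlocksConcur : Prop :=
  ∀ (p : Fin (n + 1) → ℂ) (i₀ : Fin (n + 1)),
    (∀ i ≠ i₀, ∃ j, part j = i ∧ α j p = 0) → ∃ j, part j = i₀ ∧ α j p = 0

theorem polyForm_eval (b p : Fin (n + 1) → ℂ) :
    MvPolynomial.eval p (polyForm n b) = linForm n b p := by
  simp [polyForm, linForm]

theorem blocksConcur_of_sum_eq_zero {c : Fin l → (Fin (n + 1) → ℂ)} {a : Fin (n + 1) → ℂ}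
    (ha : ∀ i, a i ≠ 0)
    (hrel : ∑ i : Fin (n + 1), MvPolynomial.C (a i) *
        ∏ j ∈ Finset.univ.filter (fun j => part j = i), polyForm n (c j) = 0) :
    BlocksConcur (fun j => linForm n (c j)) part := by
  intro p i₀ h
  have hp := congrArg (MvPolynomial.eval p) hrel
  simp only [map_sum, map_mul, MvPolynomial.eval_C, MvPolynomial.eval_prod, polyForm_eval,
    map_zero] at hp
  rw [Finset.sum_eq_single i₀ (fun i _ hi => ?_) (by simp)] at hp
  · obtain ⟨j, hj, hj0⟩ := Finset.prod_eq_zero_iff.1 ((mul_eq_zero.1 hp).resolve_left (ha i₀))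
    exact ⟨j, (Finset.mem_filter.1 hj).2, hj0⟩
  · obtain ⟨j, hj, hj0⟩ := h i hi
    rw [Finset.prod_eq_zero (Finset.mem_filter.2 ⟨Finset.mem_univ j, hj⟩) hj0, mul_zero]

theorem HasINNC.existsUnique_mate (hA : HasINNC α) (hB : BlocksConcur α part)
    {σ : Fin n → Fin (n + 1)} (hσ : Function.Injective σ) {i₀ : Fin (n + 1)}
    (hi₀ : i₀ ∉ Set.range σ) {g : Fin n → Fin l} (hg : part ∘ g = σ) :
    ∃! j, part j = i₀ ∧ tupleFlat α g ≤ LinearMap.ker (α j) := by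
  have hginj : Function.Injective g := (hg ▸ hσ).of_comp
  have hnotMem : ∀ j, part j = i₀ → j ∉ Set.range g := by
    rintro j hj ⟨k, rfl⟩
    exact hi₀ ⟨k, (congrFun hg k).symm.trans hj⟩
  obtain ⟨p, hp, hp0⟩ := Submodule.exists_mem_ne_zero_of_ne_bot (tupleFlat_ne_bot (α := α) g)
  have hspan : tupleFlat α g = Submodule.span ℂ {p} :=
    (Submodule.eq_of_le_of_finrank_eq ((Submodule.span_singleton_le_iff_mem _ _).2 hp)
      (by rw [finrank_span_singleton hp0, hA.finrank_tupleFlat hginj])).symm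
  obtain ⟨j, hj, hjp⟩ := hB p i₀ fun i hi => by
    obtain ⟨k, rfl⟩ := hσ.mem_range_of_ne hi₀ hi
    exact ⟨g k, congrFun hg k, mem_tupleFlat.1 hp k⟩
  have hjflat : tupleFlat α g ≤ LinearMap.ker (α j) := by
    rw [hspan]
    exact (Submodule.span_singleton_le_iff_mem _ _).2 hjp
  exact ⟨j, ⟨hj, hjflat⟩, fun j' hj' =>
    hA.eq_of_tupleFlat_le_ker hginj (hnotMem j' hj'.1) (hnotMem j hj) hj'.2 hjflat⟩

end Pencil

section Flags

variable {n l : ℕ} {α : Fin l → ((Fin (n + 1) → ℂ) →ₗ[ℂ] ℂ)} {part : Fin l → Fin (n + 1)}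

variable (part) in
def transversals {m : ℕ} (σ : Fin m → Fin (n + 1)) : Finset (Fin m → Fin l) :=
  Finset.univ.filter fun g => part ∘ g = σ

variable (α part) in
/-- Points of the arrangement on one hyperplane of each block, encoded by these hyperplanes:
`q.1 k ∈ Π_{σ k}` and `q.2 ∈ Π_{i₁}`. -/
def flags (σ : Fin n → Fin (n + 1)) (i₁ : Fin (n + 1)) : Finset ((Fin n → Fin l) × Fin l) :=
  open Classical in Finset.univ.filter fun q =>
    part ∘ q.1 = σ ∧ part q.2 = i₁ ∧ tupleFlat α q.1 ≤ LinearMap.ker (α q.2)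

theorem mem_transversals {m : ℕ} {σ : Fin m → Fin (n + 1)} {g : Fin m → Fin l} :
    g ∈ transversals part σ ↔ part ∘ g = σ := by
  simp [transversals]

theorem mem_flags {σ : Fin n → Fin (n + 1)} {i₁ : Fin (n + 1)} {q : (Fin n → Fin l) × Fin l} :
    q ∈ flags α part σ i₁ ↔
      part ∘ q.1 = σ ∧ part q.2 = i₁ ∧ tupleFlat α q.1 ≤ LinearMap.ker (α q.2) := by
  simp [flags]

variable {M : Type*} [AddCommMonoid M]

theorem HasINNC.sum_flags_fst (hA : HasINNC α) (hB : BlocksConcur α part)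
    {σ : Fin n → Fin (n + 1)} (hσ : Function.Injective σ) {i₁ : Fin (n + 1)}
    (hi₁ : i₁ ∉ Set.range σ) (φ : (Fin n → Fin l) → M) :
    ∑ q ∈ flags α part σ i₁, φ q.1 = ∑ g ∈ transversals part σ, φ g := by
  refine Finset.sum_bij (fun q _ => q.1) (fun q hq => mem_transversals.2 (mem_flags.1 hq).1)
    (fun q hq q' hq' h => ?_) (fun g hg => ?_) (fun _ _ => rfl)
  · obtain ⟨hq1, hq2, hq3⟩ := mem_flags.1 hq
    obtain ⟨-, hq2', hq3'⟩ := mem_flags.1 hq'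
    exact Prod.ext h <|
      (hA.existsUnique_mate hB hσ hi₁ hq1).unique ⟨hq2, hq3⟩ ⟨hq2', h ▸ hq3'⟩
  · obtain ⟨j, hj, -⟩ := hA.existsUnique_mate hB hσ hi₁ (mem_transversals.1 hg)
    exact ⟨(g, j), mem_flags.2 ⟨mem_transversals.1 hg, hj⟩, rfl⟩

theorem comp_update_of_mem_flags {σ : Fin n → Fin (n + 1)} {i₁ : Fin (n + 1)}
    {q : (Fin n → Fin l) × Fin l} (hq : q ∈ flags α part σ i₁) (t : Fin n) :
    part ∘ Function.update q.1 t q.2 = Function.update σ t i₁ := by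
  rw [Function.comp_update, (mem_flags.1 hq).1, (mem_flags.1 hq).2.1]

theorem HasINNC.tupleFlat_update_of_mem_flags (hA : HasINNC α) {σ : Fin n → Fin (n + 1)}
    (hσ : Function.Injective σ) {i₁ : Fin (n + 1)} (hi₁ : i₁ ∉ Set.range σ)
    {q : (Fin n → Fin l) × Fin l} (hq : q ∈ flags α part σ i₁) (t : Fin n) :
    tupleFlat α (Function.update q.1 t q.2) = tupleFlat α q.1 := by
  obtain ⟨hq1, -, hq3⟩ := mem_flags.1 hq
  exact hA.tupleFlat_update (hq1 ▸ hσ).of_comp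
    (comp_update_of_mem_flags hq t ▸ (hσ.update_of_notMem_range hi₁ t).1).of_comp hq3

theorem HasINNC.sum_flags_update (hA : HasINNC α) (hB : BlocksConcur α part)
    {σ : Fin n → Fin (n + 1)} (hσ : Function.Injective σ) {i₁ : Fin (n + 1)}
    (hi₁ : i₁ ∉ Set.range σ) (t : Fin n) (φ : (Fin n → Fin l) → M) :
    ∑ q ∈ flags α part σ i₁, φ (Function.update q.1 t q.2) =
      ∑ g ∈ transversals part (Function.update σ t i₁), φ g := by
  obtain ⟨hσ', ht⟩ := hσ.update_of_notMem_range hi₁ t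
  refine Finset.sum_bij (fun q _ => Function.update q.1 t q.2)
    (fun q hq => mem_transversals.2 (comp_update_of_mem_flags hq t)) (fun q hq q' hq' h => ?_)
    (fun g hg => ?_) (fun _ _ => rfl)
  · have hflat := hA.tupleFlat_update_of_mem_flags hσ hi₁ hq t
    have hflat' := hA.tupleFlat_update_of_mem_flags hσ hi₁ hq' t
    have hmate := (hA.existsUnique_mate hB hσ' ht (comp_update_of_mem_flags hq t)).unique
      (y₁ := q.1 t) (y₂ := q'.1 t)
      ⟨congrFun (mem_flags.1 hq).1 t, hflat ▸ tupleFlat_le_ker q.1 t⟩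
      ⟨congrFun (mem_flags.1 hq').1 t, h ▸ hflat' ▸ tupleFlat_le_ker q'.1 t⟩
    refine Prod.ext (funext fun k => ?_) (by simpa using congrFun h t)
    rcases eq_or_ne k t with rfl | hk
    · exact hmate
    · simpa [hk] using congrFun h k
  · obtain ⟨k, hk, hkflat⟩ := (hA.existsUnique_mate hB hσ' ht (mem_transversals.1 hg)).exists
    have hpart : part ∘ Function.update g t k = σ := by
      rw [Function.comp_update, mem_transversals.1 hg, hk, Function.update_idem,
        Function.update_eq_self]
    have hflat : tupleFlat α (Function.update g t k) = tupleFlat α g :=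
      hA.tupleFlat_update (mem_transversals.1 hg ▸ hσ').of_comp (hpart ▸ hσ).of_comp hkflat
    refine ⟨(Function.update g t k, g t), mem_flags.2 ⟨hpart, ?_, ?_⟩, ?_⟩
    · simpa using congrFun (mem_transversals.1 hg) t
    · exact hflat ▸ tupleFlat_le_ker g t
    · simp

end Flags

section BlockSums

variable {n l : ℕ} {α : Fin l → ((Fin (n + 1) → ℂ) →ₗ[ℂ] ℂ)} {part : Fin l → Fin (n + 1)}
  {M N : Type*} [AddCommGroup M] [Module ℂ M] [AddCommGroup N] [Module ℂ N]

variable (part) in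
def blockSum (x : Fin l → M) (i : Fin (n + 1)) : M :=
  ∑ j ∈ Finset.univ.filter (fun j => part j = i), x j

theorem map_blockSum_comp {m : ℕ} (F : M [⋀^Fin m]→ₗ[ℂ] N) (x : Fin l → M)
    (σ : Fin m → Fin (n + 1)) :
    F (blockSum part x ∘ σ) = ∑ g ∈ transversals part σ, F (x ∘ g) := by
  rw [← F.coe_multilinearMap, Function.comp_def]
  simp only [blockSum]
  rw [F.toMultilinearMap.map_sum_finset]
  refine Finset.sum_congr ?_ fun _ _ => rfl
  ext g
  simp [transversals, Fintype.mem_piFinset, funext_iff]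

theorem HasINNC.map_blockSum_sub_eq_sum_flags (hA : HasINNC α) (hB : BlocksConcur α part)
    (F : M [⋀^Fin n]→ₗ[ℂ] N) (x : Fin l → M) {σ : Fin n → Fin (n + 1)}
    (hσ : Function.Injective σ) {i₁ : Fin (n + 1)} (hi₁ : i₁ ∉ Set.range σ) :
    F (fun k => blockSum part x (σ k) - blockSum part x i₁) =
      ∑ q ∈ flags α part σ i₁, F (fun k => x (q.1 k) - x q.2) := by
  calc F (fun k => blockSum part x (σ k) - blockSum part x i₁)
      = F (blockSum part x ∘ σ) - ∑ t, F (blockSum part x ∘ Function.update σ t i₁) := by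
        simp_rw [F.map_sub_const, Function.comp_update]
        rfl
    _ = ∑ q ∈ flags α part σ i₁, F (x ∘ q.1) -
          ∑ t, ∑ q ∈ flags α part σ i₁, F (x ∘ Function.update q.1 t q.2) := by
        rw [map_blockSum_comp, ← hA.sum_flags_fst hB hσ hi₁]
        congr 1
        refine Finset.sum_congr rfl fun t _ => ?_
        rw [map_blockSum_comp, ← hA.sum_flags_update hB hσ hi₁ t]
    _ = ∑ q ∈ flags α part σ i₁, F (fun k => x (q.1 k) - x q.2) := by
        rw [Finset.sum_comm, ← Finset.sum_sub_distrib]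
        simp_rw [F.map_sub_const, Function.comp_update]
        rfl

end BlockSums

theorem stmt_16_general (n l : ℕ) (hn : 1 ≤ n)
    (c : Fin l → (Fin (n + 1) → ℂ))
    (hINNC : ∀ S : Finset (Fin l),
      2 ≤ Module.finrank ℂ (arrFlat n l (fun j => linForm n (c j)) S) →
      (onIdx n l (fun j => linForm n (c j))
          (arrFlat n l (fun j => linForm n (c j)) S)).card =
        (n + 1) - Module.finrank ℂ (arrFlat n l (fun j => linForm n (c j)) S))
    (hpt : ∀ S : Finset (Fin l),
      Module.finrank ℂ (arrFlat n l (fun j => linForm n (c j)) S) = 1 →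
      (onIdx n l (fun j => linForm n (c j))
          (arrFlat n l (fun j => linForm n (c j)) S)).card = n ∨
      (onIdx n l (fun j => linForm n (c j))
          (arrFlat n l (fun j => linForm n (c j)) S)).card = n + 1)
    (part : Fin l → Fin (n + 1))
    (a : Fin (n + 1) → ℂ) (ha : ∀ i, a i ≠ 0)
    (hrel : ∑ i : Fin (n + 1), MvPolynomial.C (a i) *
        ∏ j ∈ Finset.univ.filter (fun j => part j = i), polyForm n (c j) = 0)
    (w : Fin n → (Fin l → ℂ))
    (hw : ∀ (i : Fin n) (j : Fin l),
      w i j = (if part j = i.castSucc then (1 : ℂ) else 0) -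
        (if part j = Fin.last n then (1 : ℂ) else 0)) :
    (∀ u : Fin n → (Fin l → ℂ),
      (∀ i, u i ∈ Submodule.span ℂ (Set.range w)) →
      osProj n l (fun j => linForm n (c j))
        ((List.ofFn fun i : Fin n => ι ℂ (u i)).prod) = 0) ∧
    ∀ j : Fin l, ¬ (∀ x ∈ Submodule.span ℂ (Set.range w), x j = 0) := by
  set α := fun j => linForm n (c j)
  have hA : HasINNC α := ⟨hINNC, hpt⟩
  have hB : BlocksConcur α part := blocksConcur_of_sum_eq_zero ha hrel
  refine ⟨fun u hu => ?_, fun j hj => ?_⟩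
  · set F := (osProj n l α).toLinearMap.compAlternatingMap (ιMulti ℂ n)
    have hw' : w = fun k => blockSum part (fun j => Pi.single j 1) k.castSucc -
        blockSum part (fun j => Pi.single j 1) (Fin.last n) := by
      ext k j
      simp [hw, blockSum, Finset.sum_apply, Pi.single_apply]
    have hFw : F w = 0 := by
      rw [hw', hA.map_blockSum_sub_eq_sum_flags hB F _ (Fin.castSucc_injective n) (by simp)]
      refine Finset.sum_eq_zero fun q hq => osProj_ιMulti_sub_eq_zero α ?_
      exact not_linearIndependent_cons_of_tupleFlat_le_ker (mem_flags.1 hq).2.2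
    simpa [F, ιMulti_apply] using F.map_eq_zero_of_mem_span hFw hu
  · rcases Fin.eq_castSucc_or_eq_last (part j) with ⟨i, hi⟩ | hi
    · simpa [hw, hi] using hj (w i) (Submodule.subset_span ⟨i, rfl⟩)
    · simpa [hw, hi, Nat.one_le_iff_ne_zero.1 hn] using
        hj (w ⟨0, hn⟩) (Submodule.subset_span ⟨_, rfl⟩)

/-- One direction of the main theorem: if a hyperplane arrangement `A = {H_1,…,H_l}` with
isolated non-normal crossings, each crossing being a point on exactly `n+1` hyperplanes,
admits a partition `Π_1,…,Π_{n+1}` and nonzero scalars `a_i` with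
`a_1 f_1 + ⋯ + a_{n+1} f_{n+1} = 0` (where `f_i` is the product of the defining linear
forms of the hyperplanes of `Π_i`), then the subspace `V` of the degree-one part of the
Orlik–Solomon algebra spanned by `{Σ_{H_j ∈ Π_i} x_j − Σ_{H_j ∈ Π_{n+1}} x_j : 1 ≤ i ≤ n}`
is `n`-isotropic and not contained in any coordinate hyperplane. -/
theorem stmt_16 (n l : ℕ) (hn : 1 ≤ n)
    (c : Fin l → (Fin (n + 1) → ℂ)) (hc : ∀ j, c j ≠ 0)
    (hdist : ∀ j j' : Fin l,
      LinearMap.ker (linForm n (c j)) = LinearMap.ker (linForm n (c j')) → j = j')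
    (hINNC : ∀ S : Finset (Fin l),
      2 ≤ Module.finrank ℂ (arrFlat n l (fun j => linForm n (c j)) S) →
      (onIdx n l (fun j => linForm n (c j))
          (arrFlat n l (fun j => linForm n (c j)) S)).card =
        (n + 1) - Module.finrank ℂ (arrFlat n l (fun j => linForm n (c j)) S))
    (hpt : ∀ S : Finset (Fin l),
      Module.finrank ℂ (arrFlat n l (fun j => linForm n (c j)) S) = 1 →
      (onIdx n l (fun j => linForm n (c j))
          (arrFlat n l (fun j => linForm n (c j)) S)).card = n ∨
      (onIdx n l (fun j => linForm n (c j))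
          (arrFlat n l (fun j => linForm n (c j)) S)).card = n + 1)
    (part : Fin l → Fin (n + 1)) (hpart : Function.Surjective part)
    (a : Fin (n + 1) → ℂ) (ha : ∀ i, a i ≠ 0)
    (hrel : ∑ i : Fin (n + 1), MvPolynomial.C (a i) *
        ∏ j ∈ Finset.univ.filter (fun j => part j = i), polyForm n (c j) = 0)
    (w : Fin n → (Fin l → ℂ))
    (hw : ∀ (i : Fin n) (j : Fin l),
      w i j = (if part j = i.castSucc then (1 : ℂ) else 0) -
        (if part j = Fin.last n then (1 : ℂ) else 0)) :
    (∀ u : Fin n → (Fin l → ℂ),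
      (∀ i, u i ∈ Submodule.span ℂ (Set.range w)) →
      osProj n l (fun j => linForm n (c j))
        ((List.ofFn fun i : Fin n => ι ℂ (u i)).prod) = 0) ∧
    ∀ j : Fin l, ¬ (∀ x ∈ Submodule.span ℂ (Set.range w), x j = 0) :=
  stmt_16_general n l hn c hINNC hpt part a ha hrel w hw
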